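/- Let C be a nilpotent n×n complex matrix with ‖C‖ ≤ 1 and n ≤ 4, let B be an m×n complex matrix with B*B + C*C = I_n, and let A be the (m+n)×(m+n) block matrix [[0, B],[0, C]]. If the characteristic polynomial of H_A(θ) = (1/2)(e^{−iθ}A + e^{iθ}A*) is independent of θ ∈ ℝ, then the characteristic polynomial of H_C(θ) = (1/2)(e^{−iθ}C + e^{iθ}C*) is independent of θ ∈ ℝ. -/

import Mathlib

open Matrix Complex

set_option maxRecDepth 8000
set_option maxHeartbeats 1000000
set_option linter.unusedTactic false
set_option linter.unreachableTactic false

section MyAux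
open Polynomial

section Aux

variable {ι : Type*} [Fintype ι] [DecidableEq ι]

lemma my_trace_fromBlocks {p q : Type*} [Fintype p] [Fintype q]
    (P : Matrix p p ℂ) (Q : Matrix p q ℂ) (R : Matrix q p ℂ) (S : Matrix q q ℂ) :
    (fromBlocks P Q R S).trace = P.trace + S.trace := by
  simp [Matrix.trace, Fintype.sum_sum_type, Matrix.diag]

lemma my_charpoly_unitary_conj (U : Matrix.unitaryGroup ι ℂ) (D : Matrix ι ι ℂ) :
    ((U : Matrix ι ι ℂ) * D * star (U : Matrix ι ι ℂ)).charpoly = D.charpoly := by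
  have hU1 : (U : Matrix ι ι ℂ) * star (U : Matrix ι ι ℂ) = 1 :=
    Matrix.mem_unitaryGroup_iff.mp U.2
  have hmap : ((U : Matrix ι ι ℂ).map ⇑(Polynomial.C (R := ℂ)))
      * ((star (U : Matrix ι ι ℂ)).map ⇑(Polynomial.C (R := ℂ))) = 1 := by
    rw [← Matrix.map_mul, hU1]
    simp
  have key : charmatrix ((U : Matrix ι ι ℂ) * D * star (U : Matrix ι ι ℂ))
      = ((U : Matrix ι ι ℂ).map ⇑(Polynomial.C (R := ℂ))) * charmatrix D
        * ((star (U : Matrix ι ι ℂ)).map ⇑(Polynomial.C (R := ℂ))) := by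
    unfold charmatrix
    rw [Matrix.mul_sub, Matrix.sub_mul]
    congr 1
    · rw [← (Matrix.scalar_commute (X : Polynomial ℂ) (fun r => Commute.all _ _)
        ((U : Matrix ι ι ℂ).map ⇑(Polynomial.C (R := ℂ)))).eq, Matrix.mul_assoc, hmap,
        Matrix.mul_one]
    · simp only [RingHom.mapMatrix_apply, Matrix.map_mul]
  rw [Matrix.charpoly, key, Matrix.det_mul, Matrix.det_mul, mul_right_comm,
    ← Matrix.det_mul, hmap, Matrix.det_one, one_mul]
  rfl

lemma my_charpoly_diagonal (d : ι → ℂ) :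
    (Matrix.diagonal d).charpoly = ∏ i, (X - C (d i)) := by
  have h : charmatrix (Matrix.diagonal d) = Matrix.diagonal (fun i => X - C (d i)) := by
    ext i j
    by_cases hij : i = j
    · subst hij; simp [charmatrix_apply_eq]
    · simp [charmatrix_apply_ne _ _ _ hij, Matrix.diagonal_apply_ne _ hij,
        Matrix.diagonal_apply_ne' _ fun h => hij h.symm]
  rw [Matrix.charpoly, h, Matrix.det_diagonal]

lemma my_charpoly_hermitian {M : Matrix ι ι ℂ} (hM : M.IsHermitian) :
    M.charpoly = ∏ i, (X - C ((hM.eigenvalues i : ℝ) : ℂ)) := by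
  conv_lhs => rw [hM.spectral_theorem, Unitary.conjStarAlgAut_apply]
  rw [my_charpoly_unitary_conj, my_charpoly_diagonal]
  rfl

lemma my_conj_pow {U D : Matrix ι ι ℂ} (hU : star U * U = 1) (hU1 : U * star U = 1) (k : ℕ) :
    (U * D * star U) ^ k = U * D ^ k * star U := by
  have hU' : ∀ X : Matrix ι ι ℂ, star U * (U * X) = X := fun X => by
    rw [← Matrix.mul_assoc, hU, Matrix.one_mul]
  induction k with
  | zero => simp only [pow_zero, Matrix.mul_one, hU1]
  | succ k ih =>
    rw [pow_succ, ih, pow_succ]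
    simp only [Matrix.mul_assoc, hU']

lemma my_trace_pow_hermitian {M : Matrix ι ι ℂ} (hM : M.IsHermitian) (k : ℕ) :
    (M ^ k).trace = ∑ i, ((hM.eigenvalues i : ℝ) : ℂ) ^ k := by
  have h1 : star (hM.eigenvectorUnitary : Matrix ι ι ℂ) * (hM.eigenvectorUnitary : Matrix ι ι ℂ) = 1 :=
    Matrix.mem_unitaryGroup_iff'.mp hM.eigenvectorUnitary.2
  have h2 : (hM.eigenvectorUnitary : Matrix ι ι ℂ) * star (hM.eigenvectorUnitary : Matrix ι ι ℂ) = 1 :=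
    Matrix.mem_unitaryGroup_iff.mp hM.eigenvectorUnitary.2
  conv_lhs => rw [hM.spectral_theorem, Unitary.conjStarAlgAut_apply]
  rw [my_conj_pow h1 h2, Matrix.trace_mul_comm, ← Matrix.mul_assoc, h1, Matrix.one_mul,
    Matrix.diagonal_pow, Matrix.trace_diagonal]
  rfl

/-- forward bridge -/
lemma my_trace_pow_eq_of_charpoly_eq {M N : Matrix ι ι ℂ} (hM : M.IsHermitian)
    (hN : N.IsHermitian) (h : M.charpoly = N.charpoly) (k : ℕ) :
    (M ^ k).trace = (N ^ k).trace := by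
  set s : Multiset ℂ := Finset.univ.val.map (fun i => ((hM.eigenvalues i : ℝ) : ℂ)) with hs
  set t : Multiset ℂ := Finset.univ.val.map (fun i => ((hN.eigenvalues i : ℝ) : ℂ)) with ht
  have hps : M.charpoly = (s.map (fun a => X - C a)).prod := by
    rw [my_charpoly_hermitian hM, hs, Multiset.map_map]
    rfl
  have hpt : N.charpoly = (t.map (fun a => X - C a)).prod := by
    rw [my_charpoly_hermitian hN, ht, Multiset.map_map]
    rfl
  have hst : s = t := by
    rw [← Polynomial.roots_multiset_prod_X_sub_C s, ← Polynomial.roots_multiset_prod_X_sub_C t,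
      ← hps, ← hpt, h]
  have hms : (M ^ k).trace = (s.map (fun a => a ^ k)).sum := by
    rw [my_trace_pow_hermitian hM k, hs, Multiset.map_map]
    rfl
  have hmt : (N ^ k).trace = (t.map (fun a => a ^ k)).sum := by
    rw [my_trace_pow_hermitian hN k, ht, Multiset.map_map]
    rfl
  rw [hms, hmt, hst]

end Aux
section Aux2

lemma quad_expand (a b : ℂ) :
    (X - C a) * (X - C b) = X^2 - C (a + b) * X + C (a * b) := by
  simp only [C_add, C_mul]; ring

lemma cube_expand (a b c : ℂ) :
    (X - C a) * ((X - C b) * (X - C c))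
      = X^3 - C (a + b + c) * X^2 + C (a*b + a*c + b*c) * X - C (a*b*c) := by
  simp only [C_add, C_mul]; ring

lemma quart_expand (a b c d : ℂ) :
    (X - C a) * ((X - C b) * ((X - C c) * (X - C d)))
      = X^4 - C (a + b + c + d) * X^3 + C (a*b + a*c + a*d + b*c + b*d + c*d) * X^2
        - C (a*b*c + a*b*d + a*c*d + b*c*d) * X + C (a*b*c*d) := by
  simp only [C_add, C_mul]; ring

lemma my_multiset_newton (s t : Multiset ℂ) (hc : Multiset.card s = Multiset.card t)
    (h4 : Multiset.card s ≤ 4)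
    (hp : ∀ k : ℕ, 1 ≤ k → k ≤ Multiset.card s →
      (s.map (fun a => a ^ k)).sum = (t.map (fun a => a ^ k)).sum) :
    (s.map (fun a => X - C a)).prod = (t.map (fun a => X - C a)).prod := by
  have hcase : Multiset.card s = 0 ∨ Multiset.card s = 1 ∨ Multiset.card s = 2
      ∨ Multiset.card s = 3 ∨ Multiset.card s = 4 := by omega
  rcases hcase with h | h | h | h | h
  · have hs : s = 0 := Multiset.card_eq_zero.mp h
    have ht : t = 0 := Multiset.card_eq_zero.mp (by rw [← hc, h])
    simp [hs, ht]
  · obtain ⟨a, rfl⟩ := Multiset.card_eq_one.mp h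
    obtain ⟨a', rfl⟩ := Multiset.card_eq_one.mp (by rw [← hc, h])
    have h1 := hp 1 le_rfl (by omega)
    simp only [Multiset.map_singleton, Multiset.sum_singleton, pow_one] at h1
    rw [h1]
  · obtain ⟨a, b, rfl⟩ := Multiset.card_eq_two.mp h
    obtain ⟨a', b', rfl⟩ := Multiset.card_eq_two.mp (by rw [← hc, h])
    have h1 := hp 1 le_rfl (by omega)
    have h2 := hp 2 (by omega) (by omega)
    simp only [Multiset.insert_eq_cons, Multiset.map_cons, Multiset.sum_cons,
      Multiset.map_singleton, Multiset.sum_singleton, pow_one] at h1 h2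
    have e2 : a * b = a' * b' := by linear_combination ((a+b+a'+b')/2) * h1 - h2/2
    simp only [Multiset.insert_eq_cons, Multiset.map_cons, Multiset.prod_cons,
      Multiset.map_singleton, Multiset.prod_singleton]
    rw [quad_expand, quad_expand, show a+b = a'+b' by linear_combination h1, e2]
  · obtain ⟨a, b, c, rfl⟩ := Multiset.card_eq_three.mp h
    obtain ⟨a', b', c', rfl⟩ := Multiset.card_eq_three.mp (by rw [← hc, h])
    have h1 := hp 1 le_rfl (by omega)
    have h2 := hp 2 (by omega) (by omega)
    have h3 := hp 3 (by omega) (by omega)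
    simp only [Multiset.insert_eq_cons, Multiset.map_cons, Multiset.sum_cons,
      Multiset.map_singleton, Multiset.sum_singleton, pow_one] at h1 h2 h3
    have e2 : a*b + a*c + b*c = a'*b' + a'*c' + b'*c' := by
      linear_combination ((a+b+c+a'+b'+c')/2) * h1 - h2/2
    have e3 : a*b*c = a'*b'*c' := by
      linear_combination (((a+b+c)^2 + (a+b+c)*(a'+b'+c') + (a'+b'+c')^2
        - 3*(a^2+b^2+c^2))/6) * h1 - ((a'+b'+c')/2) * h2 + h3/3
    simp only [Multiset.insert_eq_cons, Multiset.map_cons, Multiset.prod_cons,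
      Multiset.map_singleton, Multiset.prod_singleton]
    rw [cube_expand, cube_expand, show a+b+c = a'+b'+c' by linear_combination h1, e2, e3]
  · -- card 4
    have hposs : 0 < Multiset.card s := by omega
    have hpost : 0 < Multiset.card t := by omega
    obtain ⟨a, s1, rfl, hs1⟩ : ∃ a s1, s = a ::ₘ s1 ∧ Multiset.card s1 = 3 := by
      obtain ⟨a, ha⟩ := Multiset.card_pos_iff_exists_mem.mp hposs
      obtain ⟨s1, rfl⟩ := Multiset.exists_cons_of_mem ha
      exact ⟨a, s1, rfl, by simpa using h⟩
    obtain ⟨a', t1, rfl, ht1⟩ : ∃ a' t1, t = a' ::ₘ t1 ∧ Multiset.card t1 = 3 := by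
      obtain ⟨a', ha⟩ := Multiset.card_pos_iff_exists_mem.mp hpost
      obtain ⟨t1, rfl⟩ := Multiset.exists_cons_of_mem ha
      refine ⟨a', t1, rfl, ?_⟩
      have h5 := hc
      simp only [Multiset.card_cons, hs1] at h5 ⊢
      omega
    obtain ⟨b, c, d, rfl⟩ := Multiset.card_eq_three.mp hs1
    obtain ⟨b', c', d', rfl⟩ := Multiset.card_eq_three.mp ht1
    have h1 := hp 1 le_rfl (by omega)
    have h2 := hp 2 (by omega) (by omega)
    have h3 := hp 3 (by omega) (by omega)
    have h4' := hp 4 (by omega) (by omega)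
    simp only [Multiset.insert_eq_cons, Multiset.map_cons, Multiset.sum_cons,
      Multiset.map_singleton, Multiset.sum_singleton, pow_one] at h1 h2 h3 h4'
    have ha1 : a + (b + (c + d)) = a' + (b' + (c' + d')) := h1
    have e2 : a*b + a*c + a*d + b*c + b*d + c*d
        = a'*b' + a'*c' + a'*d' + b'*c' + b'*d' + c'*d' := by
      linear_combination ((a+b+c+d+a'+b'+c'+d')/2) * h1 - h2/2
    have e3 : a*b*c + a*b*d + a*c*d + b*c*d = a'*b'*c' + a'*b'*d' + a'*c'*d' + b'*c'*d' := by
      linear_combination (((a+b+c+d)^2 + (a+b+c+d)*(a'+b'+c'+d') + (a'+b'+c'+d')^2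
        - 3*(a^2+b^2+c^2+d^2))/6) * h1 - ((a'+b'+c'+d')/2) * h2 + h3/3
    have e4 : a*b*c*d = a'*b'*c'*d' := by
      linear_combination (((a+b+c+d)^3 + (a+b+c+d)^2*(a'+b'+c'+d')
          + (a+b+c+d)*(a'+b'+c'+d')^2 + (a'+b'+c'+d')^3
          - 6*((a+b+c+d) + (a'+b'+c'+d'))*(a^2+b^2+c^2+d^2)
          + 8*(a^3+b^3+c^3+d^3))/24) * h1
        + ((3*(a^2+b^2+c^2+d^2) + 3*(a'^2+b'^2+c'^2+d'^2) - 6*(a'+b'+c'+d')^2)/24) * h2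
        + ((a'+b'+c'+d')/3) * h3 - h4'/4
    simp only [Multiset.insert_eq_cons, Multiset.map_cons, Multiset.prod_cons,
      Multiset.map_singleton, Multiset.prod_singleton]
    rw [quart_expand, quart_expand]
    rw [show a + b + c + d = a' + b' + c' + d' by linear_combination h1, e2, e3, e4]

end Aux2

section Aux3

lemma my_circle_infinite :
    {z : ℂ | ∃ θ : ℝ, Complex.exp ((θ : ℂ) * Complex.I) = z}.Infinite := by
  apply Set.infinite_of_injective_forall_mem
    (f := fun j : ℕ => Complex.exp (((1 / (j + 1) : ℝ) : ℂ) * Complex.I))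
  · intro j k hjk
    rw [Complex.exp_eq_exp_iff_exists_int] at hjk
    obtain ⟨z, hz⟩ := hjk
    have him := congrArg Complex.im hz
    simp only [Complex.add_im, Complex.mul_I_im, Complex.ofReal_re] at him
    have him2 : (1 / (j + 1) : ℝ) = (1 / (k + 1) : ℝ) + (z : ℝ) * (2 * Real.pi) := by
      have : (((z : ℂ)) * (2 * (Real.pi : ℂ) * Complex.I)).im = (z : ℝ) * (2 * Real.pi) := by
        simp [Complex.mul_im]
      rw [this] at him
      exact him
    have hj1 : 0 < (1 / (j + 1) : ℝ) := by positivity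
    have hk1 : 0 < (1 / (k + 1) : ℝ) := by positivity
    have hj2 : (1 / (j + 1) : ℝ) ≤ 1 := by
      rw [div_le_one (by positivity)]; push_cast; linarith [Nat.cast_nonneg (α := ℝ) j]
    have hk2 : (1 / (k + 1) : ℝ) ≤ 1 := by
      rw [div_le_one (by positivity)]; push_cast; linarith [Nat.cast_nonneg (α := ℝ) k]
    have hz0 : z = 0 := by
      rcases lt_trichotomy z 0 with h | h | h
      · exfalso
        have : (z : ℝ) ≤ -1 := by exact_mod_cast (by omega : z ≤ -1)
        nlinarith [Real.pi_gt_three]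
      · exact h
      · exfalso
        have : (1 : ℝ) ≤ (z : ℝ) := by exact_mod_cast h
        nlinarith [Real.pi_gt_three]
    rw [hz0] at him2
    simp only [Int.cast_zero, zero_mul, add_zero] at him2
    field_simp at him2
    first
    | omega
    | exact_mod_cast him2.symm
    | exact_mod_cast (by linarith : (j:ℝ) = (k:ℝ))
  · intro j
    exact ⟨(1 / (j + 1) : ℝ), rfl⟩

lemma my_poly_zero (p : Polynomial ℂ)
    (h : ∀ θ : ℝ, p.eval (Complex.exp ((θ : ℂ) * Complex.I)) = 0) : p = 0 := by
  apply Polynomial.eq_of_infinite_eval_eq p 0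
  apply Set.Infinite.mono _ my_circle_infinite
  rintro z ⟨θ, rfl⟩
  simp [h θ]

lemma my_extract (a0 a2 a4 a5 a6 a8 a10 a12 : ℂ)
    (h : ∀ θ : ℝ, a0 + a2 * Complex.exp ((θ : ℂ) * Complex.I) ^ 2
      + a4 * Complex.exp ((θ : ℂ) * Complex.I) ^ 4
      + a5 * Complex.exp ((θ : ℂ) * Complex.I) ^ 5
      + a6 * Complex.exp ((θ : ℂ) * Complex.I) ^ 6
      + a8 * Complex.exp ((θ : ℂ) * Complex.I) ^ 8
      + a10 * Complex.exp ((θ : ℂ) * Complex.I) ^ 10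
      + a12 * Complex.exp ((θ : ℂ) * Complex.I) ^ 12 = 0) : a4 = 0 := by
  have hp : (C a0 + C a2 * X ^ 2 + C a4 * X ^ 4 + C a5 * X ^ 5 + C a6 * X ^ 6
      + C a8 * X ^ 8 + C a10 * X ^ 10 + C a12 * X ^ 12 : Polynomial ℂ) = 0 := by
    apply my_poly_zero
    intro θ
    simp only [eval_add, eval_mul, eval_pow, eval_C, eval_X]
    exact h θ
  have := congrArg (fun q : Polynomial ℂ => q.coeff 4) hp
  simpa [coeff_add, coeff_C_mul, coeff_X_pow, coeff_C] using this

lemma my_charpoly_eq_of_traces {n : ℕ} (hn : n ≤ 4) {M N : Matrix (Fin n) (Fin n) ℂ}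
    (hM : M.IsHermitian) (hN : N.IsHermitian)
    (h : ∀ k : ℕ, 1 ≤ k → k ≤ n → (M ^ k).trace = (N ^ k).trace) :
    M.charpoly = N.charpoly := by
  rw [my_charpoly_hermitian hM, my_charpoly_hermitian hN]
  have hM' := my_charpoly_hermitian hM
  set s : Multiset ℂ := Finset.univ.val.map (fun i => ((hM.eigenvalues i : ℝ) : ℂ)) with hs
  set t : Multiset ℂ := Finset.univ.val.map (fun i => ((hN.eigenvalues i : ℝ) : ℂ)) with ht
  have hcard_s : Multiset.card s = n := by
    rw [hs, Multiset.card_map]; simp [Finset.card_univ]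
  have hcard_t : Multiset.card t = n := by
    rw [ht, Multiset.card_map]; simp [Finset.card_univ]
  have key := my_multiset_newton s t (by rw [hcard_s, hcard_t]) (by rw [hcard_s]; exact hn) ?_
  · calc ∏ i, (X - C ((hM.eigenvalues i : ℝ) : ℂ))
        = (s.map (fun a => X - C a)).prod := by rw [hs, Multiset.map_map]; rfl
      _ = (t.map (fun a => X - C a)).prod := key
      _ = ∏ i, (X - C ((hN.eigenvalues i : ℝ) : ℂ)) := by rw [ht, Multiset.map_map]; rfl
  · intro k hk1 hk2
    rw [hcard_s] at hk2
    have h1 : (s.map (fun a => a ^ k)).sum = (M ^ k).trace := by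
      rw [my_trace_pow_hermitian hM k, hs, Multiset.map_map]; rfl
    have h2 : (t.map (fun a => a ^ k)).sum = (N ^ k).trace := by
      rw [my_trace_pow_hermitian hN k, ht, Multiset.map_map]; rfl
    rw [h1, h2, h k hk1 hk2]

end Aux3

end MyAux




section Expand
open Polynomial
lemma my_expand1 {ι : Type*} [Fintype ι] [DecidableEq ι] (M N : Matrix ι ι ℂ) (w : ℂ) :
    ((M + w • N) ^ 1).trace =
      ((M).trace)
      + w * ((N).trace) := by
  simp only [pow_succ, pow_zero, one_mul, add_mul, mul_add, smul_mul_assoc, mul_smul_comm,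
    smul_smul, Matrix.trace_add, Matrix.trace_smul, smul_eq_mul]
  try ring

lemma my_expand2 {ι : Type*} [Fintype ι] [DecidableEq ι] (M N : Matrix ι ι ℂ) (w : ℂ) :
    ((M + w • N) ^ 2).trace =
      ((M * M).trace)
      + w * ((M * N).trace + (N * M).trace)
      + w ^ 2 * ((N * N).trace) := by
  simp only [pow_succ, pow_zero, one_mul, add_mul, mul_add, smul_mul_assoc, mul_smul_comm,
    smul_smul, Matrix.trace_add, Matrix.trace_smul, smul_eq_mul]
  try ring

lemma my_expand3 {ι : Type*} [Fintype ι] [DecidableEq ι] (M N : Matrix ι ι ℂ) (w : ℂ) :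
    ((M + w • N) ^ 3).trace =
      ((M * M * M).trace)
      + w * ((M * M * N).trace + (M * N * M).trace + (N * M * M).trace)
      + w ^ 2 * ((M * N * N).trace + (N * M * N).trace + (N * N * M).trace)
      + w ^ 3 * ((N * N * N).trace) := by
  simp only [pow_succ, pow_zero, one_mul, add_mul, mul_add, smul_mul_assoc, mul_smul_comm,
    smul_smul, Matrix.trace_add, Matrix.trace_smul, smul_eq_mul]
  try ring

lemma my_expand4 {ι : Type*} [Fintype ι] [DecidableEq ι] (M N : Matrix ι ι ℂ) (w : ℂ) :
    ((M + w • N) ^ 4).trace =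
      ((M * M * M * M).trace)
      + w * ((M * M * M * N).trace + (M * M * N * M).trace + (M * N * M * M).trace + (N * M * M * M).trace)
      + w ^ 2 * ((M * M * N * N).trace + (M * N * M * N).trace + (M * N * N * M).trace + (N * M * M * N).trace + (N * M * N * M).trace + (N * N * M * M).trace)
      + w ^ 3 * ((M * N * N * N).trace + (N * M * N * N).trace + (N * N * M * N).trace + (N * N * N * M).trace)
      + w ^ 4 * ((N * N * N * N).trace) := by
  simp only [pow_succ, pow_zero, one_mul, add_mul, mul_add, smul_mul_assoc, mul_smul_comm,
    smul_smul, Matrix.trace_add, Matrix.trace_smul, smul_eq_mul]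
  try ring

lemma my_expand5 {ι : Type*} [Fintype ι] [DecidableEq ι] (M N : Matrix ι ι ℂ) (w : ℂ) :
    ((M + w • N) ^ 5).trace =
      ((M * M * M * M * M).trace)
      + w * ((M * M * M * M * N).trace + (M * M * M * N * M).trace + (M * M * N * M * M).trace + (M * N * M * M * M).trace + (N * M * M * M * M).trace)
      + w ^ 2 * ((M * M * M * N * N).trace + (M * M * N * M * N).trace + (M * M * N * N * M).trace + (M * N * M * M * N).trace + (M * N * M * N * M).trace + (M * N * N * M * M).trace + (N * M * M * M * N).trace + (N * M * M * N * M).trace + (N * M * N * M * M).trace + (N * N * M * M * M).trace)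
      + w ^ 3 * ((M * M * N * N * N).trace + (M * N * M * N * N).trace + (M * N * N * M * N).trace + (M * N * N * N * M).trace + (N * M * M * N * N).trace + (N * M * N * M * N).trace + (N * M * N * N * M).trace + (N * N * M * M * N).trace + (N * N * M * N * M).trace + (N * N * N * M * M).trace)
      + w ^ 4 * ((M * N * N * N * N).trace + (N * M * N * N * N).trace + (N * N * M * N * N).trace + (N * N * N * M * N).trace + (N * N * N * N * M).trace)
      + w ^ 5 * ((N * N * N * N * N).trace) := by
  simp only [pow_succ, pow_zero, one_mul, add_mul, mul_add, smul_mul_assoc, mul_smul_comm,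
    smul_smul, Matrix.trace_add, Matrix.trace_smul, smul_eq_mul]
  try ring

lemma my_expand6 {ι : Type*} [Fintype ι] [DecidableEq ι] (M N : Matrix ι ι ℂ) (w : ℂ) :
    ((M + w • N) ^ 6).trace =
      ((M * M * M * M * M * M).trace)
      + w * ((M * M * M * M * M * N).trace + (M * M * M * M * N * M).trace + (M * M * M * N * M * M).trace + (M * M * N * M * M * M).trace + (M * N * M * M * M * M).trace + (N * M * M * M * M * M).trace)
      + w ^ 2 * ((M * M * M * M * N * N).trace + (M * M * M * N * M * N).trace + (M * M * M * N * N * M).trace + (M * M * N * M * M * N).trace + (M * M * N * M * N * M).trace + (M * M * N * N * M * M).trace + (M * N * M * M * M * N).trace + (M * N * M * M * N * M).trace + (M * N * M * N * M * M).trace + (M * N * N * M * M * M).trace + (N * M * M * M * M * N).trace + (N * M * M * M * N * M).trace + (N * M * M * N * M * M).trace + (N * M * N * M * M * M).trace + (N * N * M * M * M * M).trace)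
      + w ^ 3 * ((M * M * M * N * N * N).trace + (M * M * N * M * N * N).trace + (M * M * N * N * M * N).trace + (M * M * N * N * N * M).trace + (M * N * M * M * N * N).trace + (M * N * M * N * M * N).trace + (M * N * M * N * N * M).trace + (M * N * N * M * M * N).trace + (M * N * N * M * N * M).trace + (M * N * N * N * M * M).trace + (N * M * M * M * N * N).trace + (N * M * M * N * M * N).trace + (N * M * M * N * N * M).trace + (N * M * N * M * M * N).trace + (N * M * N * M * N * M).trace + (N * M * N * N * M * M).trace + (N * N * M * M * M * N).trace + (N * N * M * M * N * M).trace + (N * N * M * N * M * M).trace + (N * N * N * M * M * M).trace)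
      + w ^ 4 * ((M * M * N * N * N * N).trace + (M * N * M * N * N * N).trace + (M * N * N * M * N * N).trace + (M * N * N * N * M * N).trace + (M * N * N * N * N * M).trace + (N * M * M * N * N * N).trace + (N * M * N * M * N * N).trace + (N * M * N * N * M * N).trace + (N * M * N * N * N * M).trace + (N * N * M * M * N * N).trace + (N * N * M * N * M * N).trace + (N * N * M * N * N * M).trace + (N * N * N * M * M * N).trace + (N * N * N * M * N * M).trace + (N * N * N * N * M * M).trace)
      + w ^ 5 * ((M * N * N * N * N * N).trace + (N * M * N * N * N * N).trace + (N * N * M * N * N * N).trace + (N * N * N * M * N * N).trace + (N * N * N * N * M * N).trace + (N * N * N * N * N * M).trace)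
      + w ^ 6 * ((N * N * N * N * N * N).trace) := by
  simp only [pow_succ, pow_zero, one_mul, add_mul, mul_add, smul_mul_assoc, mul_smul_comm,
    smul_smul, Matrix.trace_add, Matrix.trace_smul, smul_eq_mul]
  try ring

end Expand

/-- `H_M(θ) = (1/2)(e^{-iθ} M + e^{iθ} Mᴴ)`. -/
noncomputable def Hmat {ι : Type*} [Fintype ι] [DecidableEq ι]
    (M : Matrix ι ι ℂ) (θ : ℝ) : Matrix ι ι ℂ :=
  (1 / 2 : ℂ) • (Complex.exp (-(θ : ℂ) * Complex.I) • M
    + Complex.exp ((θ : ℂ) * Complex.I) • Mᴴ)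

section HmatAux
open Polynomial

lemma my_hmat_herm {ι : Type*} [Fintype ι] [DecidableEq ι] (M : Matrix ι ι ℂ) (θ : ℝ) :
    (Hmat M θ).IsHermitian := by
  have h1 : star (Complex.exp (-(θ:ℂ) * Complex.I)) = Complex.exp ((θ:ℂ) * Complex.I) := by
    rw [Complex.star_def, ← Complex.exp_conj]
    congr 1
    simp only [_root_.map_mul, _root_.map_neg, Complex.conj_ofReal, Complex.conj_I]
    ring
  have h2 : star (Complex.exp ((θ:ℂ) * Complex.I)) = Complex.exp (-(θ:ℂ) * Complex.I) := by
    rw [Complex.star_def, ← Complex.exp_conj]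
    congr 1
    simp only [_root_.map_mul, Complex.conj_ofReal, Complex.conj_I]
    ring
  show _ᴴ = _
  unfold Hmat
  rw [Matrix.conjTranspose_smul, Matrix.conjTranspose_add, Matrix.conjTranspose_smul,
    Matrix.conjTranspose_smul, Matrix.conjTranspose_conjTranspose, h1, h2,
    show star ((1:ℂ)/2) = ((1:ℂ)/2) by simp]
  rw [add_comm]

lemma my_hmat_scaled {ι : Type*} [Fintype ι] [DecidableEq ι] (M : Matrix ι ι ℂ) (θ : ℝ) :
    M + (Complex.exp ((θ:ℂ) * Complex.I) * Complex.exp ((θ:ℂ) * Complex.I)) • Mᴴ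
      = (2 * Complex.exp ((θ:ℂ) * Complex.I)) • Hmat M θ := by
  have hvu : Complex.exp ((θ:ℂ) * Complex.I) * Complex.exp (-(θ:ℂ) * Complex.I) = 1 := by
    rw [← Complex.exp_add, show (θ:ℂ) * Complex.I + -(θ:ℂ) * Complex.I = 0 by ring,
      Complex.exp_zero]
  unfold Hmat
  rw [smul_smul, show (2 * Complex.exp ((θ:ℂ) * Complex.I)) * ((1:ℂ)/2)
      = Complex.exp ((θ:ℂ) * Complex.I) by ring, smul_add, smul_smul, smul_smul, hvu, one_smul]

end HmatAux

theorem stmt12 (m n : ℕ) (hn : n ≤ 4) (C : Matrix (Fin n) (Fin n) ℂ)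
    (hnil : IsNilpotent C)
    (hC : ‖Matrix.toEuclideanCLM (𝕜 := ℂ) C‖ ≤ 1)
    (B : Matrix (Fin m) (Fin n) ℂ) (hBC : Bᴴ * B + Cᴴ * C = 1)
    (A : Matrix (Fin m ⊕ Fin n) (Fin m ⊕ Fin n) ℂ)
    (hA : A = Matrix.fromBlocks 0 B 0 C)
    (hcirc : ∀ θ : ℝ, (Hmat A θ).charpoly = (Hmat A 0).charpoly) :
    ∀ θ : ℝ, (Hmat C θ).charpoly = (Hmat C 0).charpoly := by
  -- basic nilpotency facts
  have hch : C.charpoly = Polynomial.X ^ n := by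
    have h1 := Matrix.isNilpotent_charpoly_sub_pow_of_isNilpotent hnil
    have h2 := h1.eq_zero
    rw [sub_eq_zero] at h2
    simpa using h2
  have hCn : C ^ n = 0 := by
    have := Matrix.aeval_self_charpoly C
    rw [hch] at this
    simpa using this
  have hC4 : C ^ 4 = 0 := by
    rw [show (4:ℕ) = n + (4 - n) by omega, pow_add, hCn, zero_mul]
  have htrpow : ∀ j : ℕ, 1 ≤ j → (C ^ j).trace = 0 := by
    intro j hj
    rcases Nat.eq_zero_or_pos n with hn0 | hn0
    · subst hn0
      simp [Matrix.trace]
    · haveI : Nonempty (Fin n) := ⟨⟨0, hn0⟩⟩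
      have hnilj : IsNilpotent (C ^ j) := by
        obtain ⟨r, hr⟩ := hnil
        exact ⟨r, by rw [← pow_mul, mul_comm, pow_mul, hr, zero_pow (by omega)]⟩
      have hchj : (C ^ j).charpoly = Polynomial.X ^ n := by
        have h1 := Matrix.isNilpotent_charpoly_sub_pow_of_isNilpotent hnilj
        have h2 := h1.eq_zero
        rw [sub_eq_zero] at h2
        simpa using h2
      rw [Matrix.trace_eq_neg_charpoly_coeff, hchj]
      simp [Polynomial.coeff_X_pow, Fintype.card_fin]
      intro hcontra
      omega
  have htrC : C.trace = 0 := by simpa using htrpow 1 le_rfl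
  have htrC2 : (C * C).trace = 0 := by
    have := htrpow 2 (by omega); rwa [pow_two] at this
  have htrC3 : (C * C * C).trace = 0 := by
    have := htrpow 3 (by omega); rwa [pow_succ, pow_two] at this
  have htrC4 : (C * C * C * C).trace = 0 := by
    have h0 : (C ^ 4).trace = 0 := by rw [hC4]; simp
    rwa [pow_succ, pow_succ, pow_two] at h0
  -- D-calculus rules
  have hAH : Aᴴ = Matrix.fromBlocks 0 0 Bᴴ Cᴴ := by
    rw [hA, Matrix.fromBlocks_conjTranspose]
    congr 1 <;> simp
  have hr1 : Aᴴ * A = Matrix.fromBlocks 0 0 0 (1 : Matrix (Fin n) (Fin n) ℂ) := by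
    rw [hAH, hA, Matrix.fromBlocks_multiply]
    congr 1 <;> simp [hBC]
  have hr1' : ∀ X : Matrix (Fin m ⊕ Fin n) (Fin m ⊕ Fin n) ℂ,
      X * Aᴴ * A = X * Matrix.fromBlocks 0 0 0 (1 : Matrix (Fin n) (Fin n) ℂ) := by
    intro X; rw [mul_assoc, hr1]
  have hr2 : ∀ M : Matrix (Fin n) (Fin n) ℂ,
      Matrix.fromBlocks (0 : Matrix (Fin m) (Fin m) ℂ) 0 0 M * A = Matrix.fromBlocks 0 0 0 (M * C) := by
    intro M; rw [hA, Matrix.fromBlocks_multiply]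
    congr 1 <;> simp
  have hr2' : ∀ (X : Matrix (Fin m ⊕ Fin n) (Fin m ⊕ Fin n) ℂ) (M : Matrix (Fin n) (Fin n) ℂ),
      X * Matrix.fromBlocks (0 : Matrix (Fin m) (Fin m) ℂ) 0 0 M * A = X * Matrix.fromBlocks 0 0 0 (M * C) := by
    intro X M; rw [mul_assoc, hr2]
  have hr3 : ∀ M : Matrix (Fin n) (Fin n) ℂ,
      Aᴴ * Matrix.fromBlocks (0 : Matrix (Fin m) (Fin m) ℂ) 0 0 M = Matrix.fromBlocks 0 0 0 (Cᴴ * M) := by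
    intro M; rw [hAH, Matrix.fromBlocks_multiply]
    congr 1 <;> simp
  have hr3' : ∀ (X : Matrix (Fin m ⊕ Fin n) (Fin m ⊕ Fin n) ℂ) (M : Matrix (Fin n) (Fin n) ℂ),
      X * Aᴴ * Matrix.fromBlocks (0 : Matrix (Fin m) (Fin m) ℂ) 0 0 M = X * Matrix.fromBlocks 0 0 0 (Cᴴ * M) := by
    intro X M; rw [mul_assoc, hr3]
  have hr4 : ∀ M N : Matrix (Fin n) (Fin n) ℂ,
      Matrix.fromBlocks (0 : Matrix (Fin m) (Fin m) ℂ) 0 0 M * Matrix.fromBlocks (0 : Matrix (Fin m) (Fin m) ℂ) 0 0 N = Matrix.fromBlocks 0 0 0 (M * N) := by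
    intro M N; rw [Matrix.fromBlocks_multiply]
    congr 1 <;> simp
  have hr4' : ∀ (X : Matrix (Fin m ⊕ Fin n) (Fin m ⊕ Fin n) ℂ) (M N : Matrix (Fin n) (Fin n) ℂ),
      X * Matrix.fromBlocks (0 : Matrix (Fin m) (Fin m) ℂ) 0 0 M * Matrix.fromBlocks (0 : Matrix (Fin m) (Fin m) ℂ) 0 0 N = X * Matrix.fromBlocks 0 0 0 (M * N) := by
    intro X M N; rw [mul_assoc, hr4]
  have tT1 : ∀ M : Matrix (Fin n) (Fin n) ℂ,
      (Matrix.fromBlocks (0 : Matrix (Fin m) (Fin m) ℂ) 0 0 M).trace = M.trace := by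
    intro M; rw [my_trace_fromBlocks]; simp
  have tT2 : ∀ M : Matrix (Fin n) (Fin n) ℂ,
      (Matrix.fromBlocks (0 : Matrix (Fin m) (Fin m) ℂ) 0 0 M * Aᴴ).trace = (M * Cᴴ).trace := by
    intro M
    rw [hAH, Matrix.fromBlocks_multiply, my_trace_fromBlocks]
    simp
  have ha5_0 : (A * A * A * Aᴴ * Aᴴ).trace = (C * C * Cᴴ).trace := by
    rw [show A * A * A * Aᴴ * Aᴴ = (A * A * A * Aᴴ) * (Aᴴ) from by simp only [Matrix.mul_assoc]]
    rw [Matrix.trace_mul_comm]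
    try simp only [← Matrix.mul_assoc]
    simp only [hr1, hr1', hr2, hr2', hr3, hr3', hr4, hr4', tT1, tT2, one_mul, mul_one,
      Matrix.one_mul, Matrix.mul_one]
  have ha5_1 : (A * A * Aᴴ * A * Aᴴ).trace = (C).trace := by
    rw [show A * A * Aᴴ * A * Aᴴ = (A * A) * (Aᴴ * A * Aᴴ) from by simp only [Matrix.mul_assoc]]
    rw [Matrix.trace_mul_comm]
    try simp only [← Matrix.mul_assoc]
    simp only [hr1, hr1', hr2, hr2', hr3, hr3', hr4, hr4', tT1, tT2, one_mul, mul_one,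
      Matrix.one_mul, Matrix.mul_one]
  have ha5_2 : (A * A * Aᴴ * Aᴴ * A).trace = (C * C * Cᴴ).trace := by
    rw [show A * A * Aᴴ * Aᴴ * A = (A * A * Aᴴ) * (Aᴴ * A) from by simp only [Matrix.mul_assoc]]
    rw [Matrix.trace_mul_comm]
    try simp only [← Matrix.mul_assoc]
    simp only [hr1, hr1', hr2, hr2', hr3, hr3', hr4, hr4', tT1, tT2, one_mul, mul_one,
      Matrix.one_mul, Matrix.mul_one]
  have ha5_3 : (A * Aᴴ * A * A * Aᴴ).trace = (C).trace := by
    rw [show A * Aᴴ * A * A * Aᴴ = (A) * (Aᴴ * A * A * Aᴴ) from by simp only [Matrix.mul_assoc]]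
    rw [Matrix.trace_mul_comm]
    try simp only [← Matrix.mul_assoc]
    simp only [hr1, hr1', hr2, hr2', hr3, hr3', hr4, hr4', tT1, tT2, one_mul, mul_one,
      Matrix.one_mul, Matrix.mul_one]
  have ha5_4 : (A * Aᴴ * A * Aᴴ * A).trace = (C).trace := by
    rw [show A * Aᴴ * A * Aᴴ * A = (A) * (Aᴴ * A * Aᴴ * A) from by simp only [Matrix.mul_assoc]]
    rw [Matrix.trace_mul_comm]
    try simp only [← Matrix.mul_assoc]
    simp only [hr1, hr1', hr2, hr2', hr3, hr3', hr4, hr4', tT1, tT2, one_mul, mul_one,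
      Matrix.one_mul, Matrix.mul_one]
  have ha5_5 : (A * Aᴴ * Aᴴ * A * A).trace = (C * C * Cᴴ).trace := by
    rw [show A * Aᴴ * Aᴴ * A * A = (A * Aᴴ) * (Aᴴ * A * A) from by simp only [Matrix.mul_assoc]]
    rw [Matrix.trace_mul_comm]
    try simp only [← Matrix.mul_assoc]
    simp only [hr1, hr1', hr2, hr2', hr3, hr3', hr4, hr4', tT1, tT2, one_mul, mul_one,
      Matrix.one_mul, Matrix.mul_one]
  have ha5_6 : (Aᴴ * A * A * A * Aᴴ).trace = (C * C * Cᴴ).trace := by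
    simp only [hr1, hr1', hr2, hr2', hr3, hr3', hr4, hr4', tT1, tT2, one_mul, mul_one,
      Matrix.one_mul, Matrix.mul_one]
  have ha5_7 : (Aᴴ * A * A * Aᴴ * A).trace = (C).trace := by
    simp only [hr1, hr1', hr2, hr2', hr3, hr3', hr4, hr4', tT1, tT2, one_mul, mul_one,
      Matrix.one_mul, Matrix.mul_one]
  have ha5_8 : (Aᴴ * A * Aᴴ * A * A).trace = (C).trace := by
    simp only [hr1, hr1', hr2, hr2', hr3, hr3', hr4, hr4', tT1, tT2, one_mul, mul_one,
      Matrix.one_mul, Matrix.mul_one]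
  have ha5_9 : (Aᴴ * Aᴴ * A * A * A).trace = (C * C * Cᴴ).trace := by
    rw [show Aᴴ * Aᴴ * A * A * A = (Aᴴ) * (Aᴴ * A * A * A) from by simp only [Matrix.mul_assoc]]
    rw [Matrix.trace_mul_comm]
    try simp only [← Matrix.mul_assoc]
    simp only [hr1, hr1', hr2, hr2', hr3, hr3', hr4, hr4', tT1, tT2, one_mul, mul_one,
      Matrix.one_mul, Matrix.mul_one]
  have ha6_0 : (A * A * A * A * Aᴴ * Aᴴ).trace = (C * C * C * Cᴴ).trace := by
    rw [show A * A * A * A * Aᴴ * Aᴴ = (A * A * A * A * Aᴴ) * (Aᴴ) from by simp only [Matrix.mul_assoc]]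
    rw [Matrix.trace_mul_comm]
    try simp only [← Matrix.mul_assoc]
    simp only [hr1, hr1', hr2, hr2', hr3, hr3', hr4, hr4', tT1, tT2, one_mul, mul_one,
      Matrix.one_mul, Matrix.mul_one]
  have ha6_1 : (A * A * A * Aᴴ * A * Aᴴ).trace = (C * C).trace := by
    rw [show A * A * A * Aᴴ * A * Aᴴ = (A * A * A) * (Aᴴ * A * Aᴴ) from by simp only [Matrix.mul_assoc]]
    rw [Matrix.trace_mul_comm]
    try simp only [← Matrix.mul_assoc]
    simp only [hr1, hr1', hr2, hr2', hr3, hr3', hr4, hr4', tT1, tT2, one_mul, mul_one,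
      Matrix.one_mul, Matrix.mul_one]
  have ha6_2 : (A * A * A * Aᴴ * Aᴴ * A).trace = (C * C * C * Cᴴ).trace := by
    rw [show A * A * A * Aᴴ * Aᴴ * A = (A * A * A * Aᴴ) * (Aᴴ * A) from by simp only [Matrix.mul_assoc]]
    rw [Matrix.trace_mul_comm]
    try simp only [← Matrix.mul_assoc]
    simp only [hr1, hr1', hr2, hr2', hr3, hr3', hr4, hr4', tT1, tT2, one_mul, mul_one,
      Matrix.one_mul, Matrix.mul_one]
  have ha6_3 : (A * A * Aᴴ * A * A * Aᴴ).trace = (C * C).trace := by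
    rw [show A * A * Aᴴ * A * A * Aᴴ = (A * A) * (Aᴴ * A * A * Aᴴ) from by simp only [Matrix.mul_assoc]]
    rw [Matrix.trace_mul_comm]
    try simp only [← Matrix.mul_assoc]
    simp only [hr1, hr1', hr2, hr2', hr3, hr3', hr4, hr4', tT1, tT2, one_mul, mul_one,
      Matrix.one_mul, Matrix.mul_one]
  have ha6_4 : (A * A * Aᴴ * A * Aᴴ * A).trace = (C * C).trace := by
    rw [show A * A * Aᴴ * A * Aᴴ * A = (A * A) * (Aᴴ * A * Aᴴ * A) from by simp only [Matrix.mul_assoc]]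
    rw [Matrix.trace_mul_comm]
    try simp only [← Matrix.mul_assoc]
    simp only [hr1, hr1', hr2, hr2', hr3, hr3', hr4, hr4', tT1, tT2, one_mul, mul_one,
      Matrix.one_mul, Matrix.mul_one]
  have ha6_5 : (A * A * Aᴴ * Aᴴ * A * A).trace = (C * C * C * Cᴴ).trace := by
    rw [show A * A * Aᴴ * Aᴴ * A * A = (A * A * Aᴴ) * (Aᴴ * A * A) from by simp only [Matrix.mul_assoc]]
    rw [Matrix.trace_mul_comm]
    try simp only [← Matrix.mul_assoc]
    simp only [hr1, hr1', hr2, hr2', hr3, hr3', hr4, hr4', tT1, tT2, one_mul, mul_one,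
      Matrix.one_mul, Matrix.mul_one]
  have ha6_6 : (A * Aᴴ * A * A * A * Aᴴ).trace = (C * C).trace := by
    rw [show A * Aᴴ * A * A * A * Aᴴ = (A) * (Aᴴ * A * A * A * Aᴴ) from by simp only [Matrix.mul_assoc]]
    rw [Matrix.trace_mul_comm]
    try simp only [← Matrix.mul_assoc]
    simp only [hr1, hr1', hr2, hr2', hr3, hr3', hr4, hr4', tT1, tT2, one_mul, mul_one,
      Matrix.one_mul, Matrix.mul_one]
  have ha6_7 : (A * Aᴴ * A * A * Aᴴ * A).trace = (C * C).trace := by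
    rw [show A * Aᴴ * A * A * Aᴴ * A = (A) * (Aᴴ * A * A * Aᴴ * A) from by simp only [Matrix.mul_assoc]]
    rw [Matrix.trace_mul_comm]
    try simp only [← Matrix.mul_assoc]
    simp only [hr1, hr1', hr2, hr2', hr3, hr3', hr4, hr4', tT1, tT2, one_mul, mul_one,
      Matrix.one_mul, Matrix.mul_one]
  have ha6_8 : (A * Aᴴ * A * Aᴴ * A * A).trace = (C * C).trace := by
    rw [show A * Aᴴ * A * Aᴴ * A * A = (A) * (Aᴴ * A * Aᴴ * A * A) from by simp only [Matrix.mul_assoc]]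
    rw [Matrix.trace_mul_comm]
    try simp only [← Matrix.mul_assoc]
    simp only [hr1, hr1', hr2, hr2', hr3, hr3', hr4, hr4', tT1, tT2, one_mul, mul_one,
      Matrix.one_mul, Matrix.mul_one]
  have ha6_9 : (A * Aᴴ * Aᴴ * A * A * A).trace = (C * C * C * Cᴴ).trace := by
    rw [show A * Aᴴ * Aᴴ * A * A * A = (A * Aᴴ) * (Aᴴ * A * A * A) from by simp only [Matrix.mul_assoc]]
    rw [Matrix.trace_mul_comm]
    try simp only [← Matrix.mul_assoc]
    simp only [hr1, hr1', hr2, hr2', hr3, hr3', hr4, hr4', tT1, tT2, one_mul, mul_one,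
      Matrix.one_mul, Matrix.mul_one]
  have ha6_10 : (Aᴴ * A * A * A * A * Aᴴ).trace = (C * C * C * Cᴴ).trace := by
    simp only [hr1, hr1', hr2, hr2', hr3, hr3', hr4, hr4', tT1, tT2, one_mul, mul_one,
      Matrix.one_mul, Matrix.mul_one]
  have ha6_11 : (Aᴴ * A * A * A * Aᴴ * A).trace = (C * C).trace := by
    simp only [hr1, hr1', hr2, hr2', hr3, hr3', hr4, hr4', tT1, tT2, one_mul, mul_one,
      Matrix.one_mul, Matrix.mul_one]
  have ha6_12 : (Aᴴ * A * A * Aᴴ * A * A).trace = (C * C).trace := by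
    simp only [hr1, hr1', hr2, hr2', hr3, hr3', hr4, hr4', tT1, tT2, one_mul, mul_one,
      Matrix.one_mul, Matrix.mul_one]
  have ha6_13 : (Aᴴ * A * Aᴴ * A * A * A).trace = (C * C).trace := by
    simp only [hr1, hr1', hr2, hr2', hr3, hr3', hr4, hr4', tT1, tT2, one_mul, mul_one,
      Matrix.one_mul, Matrix.mul_one]
  have ha6_14 : (Aᴴ * Aᴴ * A * A * A * A).trace = (C * C * C * Cᴴ).trace := by
    rw [show Aᴴ * Aᴴ * A * A * A * A = (Aᴴ) * (Aᴴ * A * A * A * A) from by simp only [Matrix.mul_assoc]]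
    rw [Matrix.trace_mul_comm]
    try simp only [← Matrix.mul_assoc]
    simp only [hr1, hr1', hr2, hr2', hr3, hr3', hr4, hr4', tT1, tT2, one_mul, mul_one,
      Matrix.one_mul, Matrix.mul_one]
  have hAherm : ∀ θ : ℝ, (Hmat A θ).IsHermitian := fun θ => my_hmat_herm A θ
  have hCherm : ∀ θ : ℝ, (Hmat C θ).IsHermitian := fun θ => my_hmat_herm C θ
  have ht5 : ∀ θ : ℝ, ((Hmat A θ) ^ 5).trace = ((Hmat A 0) ^ 5).trace := fun θ =>
    my_trace_pow_eq_of_charpoly_eq (hAherm θ) (hAherm 0) (hcirc θ) 5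
  have ht6 : ∀ θ : ℝ, ((Hmat A θ) ^ 6).trace = ((Hmat A 0) ^ 6).trace := fun θ =>
    my_trace_pow_eq_of_charpoly_eq (hAherm θ) (hAherm 0) (hcirc θ) 6
  have hW5 : ((A * A * A * Aᴴ * Aᴴ).trace + (A * A * Aᴴ * A * Aᴴ).trace + (A * A * Aᴴ * Aᴴ * A).trace + (A * Aᴴ * A * A * Aᴴ).trace + (A * Aᴴ * A * Aᴴ * A).trace + (A * Aᴴ * Aᴴ * A * A).trace + (Aᴴ * A * A * A * Aᴴ).trace + (Aᴴ * A * A * Aᴴ * A).trace + (Aᴴ * A * Aᴴ * A * A).trace + (Aᴴ * Aᴴ * A * A * A).trace) = 0 := by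
    apply my_extract ((A * A * A * A * A).trace) ((A * A * A * A * Aᴴ).trace + (A * A * A * Aᴴ * A).trace + (A * A * Aᴴ * A * A).trace + (A * Aᴴ * A * A * A).trace + (Aᴴ * A * A * A * A).trace) _ (-(32 * ((Hmat A 0) ^ 5).trace)) ((A * A * Aᴴ * Aᴴ * Aᴴ).trace + (A * Aᴴ * A * Aᴴ * Aᴴ).trace + (A * Aᴴ * Aᴴ * A * Aᴴ).trace + (A * Aᴴ * Aᴴ * Aᴴ * A).trace + (Aᴴ * A * A * Aᴴ * Aᴴ).trace + (Aᴴ * A * Aᴴ * A * Aᴴ).trace + (Aᴴ * A * Aᴴ * Aᴴ * A).trace + (Aᴴ * Aᴴ * A * A * Aᴴ).trace + (Aᴴ * Aᴴ * A * Aᴴ * A).trace + (Aᴴ * Aᴴ * Aᴴ * A * A).trace) ((A * Aᴴ * Aᴴ * Aᴴ * Aᴴ).trace + (Aᴴ * A * Aᴴ * Aᴴ * Aᴴ).trace + (Aᴴ * Aᴴ * A * Aᴴ * Aᴴ).trace + (Aᴴ * Aᴴ * Aᴴ * A * Aᴴ).trace + (Aᴴ * Aᴴ * Aᴴ * Aᴴ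 * A).trace) ((Aᴴ * Aᴴ * Aᴴ * Aᴴ * Aᴴ).trace) 0
    intro θ
    have he := my_expand5 A Aᴴ (Complex.exp ((θ:ℂ) * Complex.I) * Complex.exp ((θ:ℂ) * Complex.I))
    rw [my_hmat_scaled A θ, smul_pow, Matrix.trace_smul, smul_eq_mul, ht5 θ] at he
    linear_combination -he
  have hW6 : ((A * A * A * A * Aᴴ * Aᴴ).trace + (A * A * A * Aᴴ * A * Aᴴ).trace + (A * A * A * Aᴴ * Aᴴ * A).trace + (A * A * Aᴴ * A * A * Aᴴ).trace + (A * A * Aᴴ * A * Aᴴ * A).trace + (A * A * Aᴴ * Aᴴ * A * A).trace + (A * Aᴴ * A * A * A * Aᴴ).trace + (A * Aᴴ * A * A * Aᴴ * A).trace + (A * Aᴴ * A * Aᴴ * A * A).trace + (A * Aᴴ * Aᴴ * A * A * A).trace + (Aᴴ * A * A * A * A * Aᴴ).trace + (Aᴴ * A * A * A * Aᴴ * A).trace + (Aᴴ * A * A * Aᴴ * A * A).trace + (Aᴴ * A * Aᴴ * A * A * A).trace + (Aᴴ * Aᴴ * A * A * A * A).trace) = 0 := by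
    apply my_extract ((A * A * A * A * A * A).trace) ((A * A * A * A * A * Aᴴ).trace + (A * A * A * A * Aᴴ * A).trace + (A * A * A * Aᴴ * A * A).trace + (A * A * Aᴴ * A * A * A).trace + (A * Aᴴ * A * A * A * A).trace + (Aᴴ * A * A * A * A * A).trace) _ 0 (((A * A * A * Aᴴ * Aᴴ * Aᴴ).trace + (A * A * Aᴴ * A * Aᴴ * Aᴴ).trace + (A * A * Aᴴ * Aᴴ * A * Aᴴ).trace + (A * A * Aᴴ * Aᴴ * Aᴴ * A).trace + (A * Aᴴ * A * A * Aᴴ * Aᴴ).trace + (A * Aᴴ * A * Aᴴ * A * Aᴴ).trace + (A * Aᴴ * A * Aᴴ * Aᴴ * A).trace + (A * Aᴴ * Aᴴ * A * A * Aᴴ).trace + (A * Aᴴ * Aᴴ * A * Aᴴ * A).trace + (A * Aᴴ * Aᴴ * Aᴴ * A * A).trace + (Aᴴ * A * A * A * Aᴴ * Aᴴ).trace + (Aᴴ * A * A * Aᴴ * A * Aᴴ).trace + (Aᴴ * A * A * Aᴴ * Aᴴ * A).trace + (Aᴴ * A * Aᴴ * A * A * Aᴴ).trace + (Aᴴ *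 A * Aᴴ * A * Aᴴ * A).trace + (Aᴴ * A * Aᴴ * Aᴴ * A * A).trace + (Aᴴ * Aᴴ * A * A * A * Aᴴ).trace + (Aᴴ * Aᴴ * A * A * Aᴴ * A).trace + (Aᴴ * Aᴴ * A * Aᴴ * A * A).trace + (Aᴴ * Aᴴ * Aᴴ * A * A * A).trace) - 64 * ((Hmat A 0) ^ 6).trace) ((A * A * Aᴴ * Aᴴ * Aᴴ * Aᴴ).trace + (A * Aᴴ * A * Aᴴ * Aᴴ * Aᴴ).trace + (A * Aᴴ * Aᴴ * A * Aᴴ * Aᴴ).trace + (A * Aᴴ * Aᴴ * Aᴴ * A * Aᴴ).trace + (A * Aᴴ * Aᴴ * Aᴴ * Aᴴ * A).trace + (Aᴴ * A * A * Aᴴ * Aᴴ * Aᴴ).trace + (Aᴴ * A * Aᴴ * A * Aᴴ * Aᴴ).trace + (Aᴴ * A * Aᴴ * Aᴴ * A * Aᴴ).trace + (Aᴴ * A * Aᴴ * Aᴴ * Aᴴ * A).trace + (Aᴴ * Aᴴ * A * A * Aᴴ * Aᴴ).trace + (Aᴴ * Aᴴ * A * Aᴴ * A * Aᴴ).trace +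 (Aᴴ * Aᴴ * A * Aᴴ * Aᴴ * A).trace + (Aᴴ * Aᴴ * Aᴴ * A * A * Aᴴ).trace + (Aᴴ * Aᴴ * Aᴴ * A * Aᴴ * A).trace + (Aᴴ * Aᴴ * Aᴴ * Aᴴ * A * A).trace) ((A * Aᴴ * Aᴴ * Aᴴ * Aᴴ * Aᴴ).trace + (Aᴴ * A * Aᴴ * Aᴴ * Aᴴ * Aᴴ).trace + (Aᴴ * Aᴴ * A * Aᴴ * Aᴴ * Aᴴ).trace + (Aᴴ * Aᴴ * Aᴴ * A * Aᴴ * Aᴴ).trace + (Aᴴ * Aᴴ * Aᴴ * Aᴴ * A * Aᴴ).trace + (Aᴴ * Aᴴ * Aᴴ * Aᴴ * Aᴴ * A).trace) ((Aᴴ * Aᴴ * Aᴴ * Aᴴ * Aᴴ * Aᴴ).trace)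
    intro θ
    have he := my_expand6 A Aᴴ (Complex.exp ((θ:ℂ) * Complex.I) * Complex.exp ((θ:ℂ) * Complex.I))
    rw [my_hmat_scaled A θ, smul_pow, Matrix.trace_smul, smul_eq_mul, ht6 θ] at he
    linear_combination -he
  rw [ha5_0, ha5_1, ha5_2, ha5_3, ha5_4, ha5_5, ha5_6, ha5_7, ha5_8, ha5_9] at hW5
  rw [ha6_0, ha6_1, ha6_2, ha6_3, ha6_4, ha6_5, ha6_6, ha6_7, ha6_8, ha6_9, ha6_10, ha6_11, ha6_12, ha6_13, ha6_14] at hW6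
  have hF5 : (C * C * Cᴴ).trace = 0 := by linear_combination hW5 / 5 - htrC
  have hF6 : (C * C * C * Cᴴ).trace = 0 := by linear_combination hW6 / 6 - (3 / 2 : ℂ) * htrC2
  have hz_0 : (C).trace = 0 := by
    exact htrC
  have hz_00 : (C * C).trace = 0 := by
    exact htrC2
  have hz_000 : (C * C * C).trace = 0 := by
    exact htrC3
  have hz_001 : (C * C * Cᴴ).trace = 0 := by
    exact hF5
  have hz_010 : (C * Cᴴ * C).trace = 0 := by
    rw [show C * Cᴴ * C = (C * Cᴴ) * (C) from by simp only [Matrix.mul_assoc]]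
    rw [Matrix.trace_mul_comm]
    try simp only [← Matrix.mul_assoc]
    exact hF5
  have hz_100 : (Cᴴ * C * C).trace = 0 := by
    rw [show Cᴴ * C * C = (Cᴴ) * (C * C) from by simp only [Matrix.mul_assoc]]
    rw [Matrix.trace_mul_comm]
    try simp only [← Matrix.mul_assoc]
    exact hF5
  have hz_0000 : (C * C * C * C).trace = 0 := by
    exact htrC4
  have hz_0001 : (C * C * C * Cᴴ).trace = 0 := by
    exact hF6
  have hz_0010 : (C * C * Cᴴ * C).trace = 0 := by
    rw [show C * C * Cᴴ * C = (C * C * Cᴴ) * (C) from by simp only [Matrix.mul_assoc]]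
    rw [Matrix.trace_mul_comm]
    try simp only [← Matrix.mul_assoc]
    exact hF6
  have hz_0100 : (C * Cᴴ * C * C).trace = 0 := by
    rw [show C * Cᴴ * C * C = (C * Cᴴ) * (C * C) from by simp only [Matrix.mul_assoc]]
    rw [Matrix.trace_mul_comm]
    try simp only [← Matrix.mul_assoc]
    exact hF6
  have hz_1000 : (Cᴴ * C * C * C).trace = 0 := by
    rw [show Cᴴ * C * C * C = (Cᴴ) * (C * C * C) from by simp only [Matrix.mul_assoc]]
    rw [Matrix.trace_mul_comm]
    try simp only [← Matrix.mul_assoc]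
    exact hF6
  have hz_1 : (Cᴴ).trace = 0 := by
    rw [show Cᴴ = (C)ᴴ from by simp only [Matrix.conjTranspose_mul, Matrix.conjTranspose_conjTranspose, Matrix.mul_assoc]]
    rw [Matrix.trace_conjTranspose, hz_0, star_zero]
  have hz_11 : (Cᴴ * Cᴴ).trace = 0 := by
    rw [show Cᴴ * Cᴴ = (C * C)ᴴ from by simp only [Matrix.conjTranspose_mul, Matrix.conjTranspose_conjTranspose, Matrix.mul_assoc]]
    rw [Matrix.trace_conjTranspose, hz_00, star_zero]
  have hz_011 : (C * Cᴴ * Cᴴ).trace = 0 := by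
    rw [show C * Cᴴ * Cᴴ = (C * C * Cᴴ)ᴴ from by simp only [Matrix.conjTranspose_mul, Matrix.conjTranspose_conjTranspose, Matrix.mul_assoc]]
    rw [Matrix.trace_conjTranspose, hz_001, star_zero]
  have hz_101 : (Cᴴ * C * Cᴴ).trace = 0 := by
    rw [show Cᴴ * C * Cᴴ = (C * Cᴴ * C)ᴴ from by simp only [Matrix.conjTranspose_mul, Matrix.conjTranspose_conjTranspose, Matrix.mul_assoc]]
    rw [Matrix.trace_conjTranspose, hz_010, star_zero]
  have hz_110 : (Cᴴ * Cᴴ * C).trace = 0 := by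
    rw [show Cᴴ * Cᴴ * C = (Cᴴ * C * C)ᴴ from by simp only [Matrix.conjTranspose_mul, Matrix.conjTranspose_conjTranspose, Matrix.mul_assoc]]
    rw [Matrix.trace_conjTranspose, hz_100, star_zero]
  have hz_111 : (Cᴴ * Cᴴ * Cᴴ).trace = 0 := by
    rw [show Cᴴ * Cᴴ * Cᴴ = (C * C * C)ᴴ from by simp only [Matrix.conjTranspose_mul, Matrix.conjTranspose_conjTranspose, Matrix.mul_assoc]]
    rw [Matrix.trace_conjTranspose, hz_000, star_zero]
  have hz_0111 : (C * Cᴴ * Cᴴ * Cᴴ).trace = 0 := by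
    rw [show C * Cᴴ * Cᴴ * Cᴴ = (C * C * C * Cᴴ)ᴴ from by simp only [Matrix.conjTranspose_mul, Matrix.conjTranspose_conjTranspose, Matrix.mul_assoc]]
    rw [Matrix.trace_conjTranspose, hz_0001, star_zero]
  have hz_1011 : (Cᴴ * C * Cᴴ * Cᴴ).trace = 0 := by
    rw [show Cᴴ * C * Cᴴ * Cᴴ = (C * C * Cᴴ * C)ᴴ from by simp only [Matrix.conjTranspose_mul, Matrix.conjTranspose_conjTranspose, Matrix.mul_assoc]]
    rw [Matrix.trace_conjTranspose, hz_0010, star_zero]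
  have hz_1101 : (Cᴴ * Cᴴ * C * Cᴴ).trace = 0 := by
    rw [show Cᴴ * Cᴴ * C * Cᴴ = (C * Cᴴ * C * C)ᴴ from by simp only [Matrix.conjTranspose_mul, Matrix.conjTranspose_conjTranspose, Matrix.mul_assoc]]
    rw [Matrix.trace_conjTranspose, hz_0100, star_zero]
  have hz_1110 : (Cᴴ * Cᴴ * Cᴴ * C).trace = 0 := by
    rw [show Cᴴ * Cᴴ * Cᴴ * C = (Cᴴ * C * C * C)ᴴ from by simp only [Matrix.conjTranspose_mul, Matrix.conjTranspose_conjTranspose, Matrix.mul_assoc]]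
    rw [Matrix.trace_conjTranspose, hz_1000, star_zero]
  have hz_1111 : (Cᴴ * Cᴴ * Cᴴ * Cᴴ).trace = 0 := by
    rw [show Cᴴ * Cᴴ * Cᴴ * Cᴴ = (C * C * C * C)ᴴ from by simp only [Matrix.conjTranspose_mul, Matrix.conjTranspose_conjTranspose, Matrix.mul_assoc]]
    rw [Matrix.trace_conjTranspose, hz_0000, star_zero]
  have hT1 : ∀ θ : ℝ, ((Hmat C θ) ^ 1).trace = 0 := by
    intro θ
    apply mul_left_cancel₀ (pow_ne_zero 1 (mul_ne_zero two_ne_zero (Complex.exp_ne_zero _)))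
    calc (2 * Complex.exp ((θ:ℂ) * Complex.I)) ^ 1 * ((Hmat C θ) ^ 1).trace
        = (((2 * Complex.exp ((θ:ℂ) * Complex.I)) • Hmat C θ) ^ 1).trace := by
          rw [smul_pow, Matrix.trace_smul, smul_eq_mul]
      _ = ((C + (Complex.exp ((θ:ℂ) * Complex.I) * Complex.exp ((θ:ℂ) * Complex.I)) • Cᴴ) ^ 1).trace := by
          rw [← my_hmat_scaled C θ]
      _ = _ := my_expand1 C Cᴴ _
      _ = (2 * Complex.exp ((θ:ℂ) * Complex.I)) ^ 1 * (0) := by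
          rw [hz_0, hz_1]
          ring
  have hT2 : ∀ θ : ℝ, ((Hmat C θ) ^ 2).trace = ((1:ℂ)/4) * ((C * Cᴴ).trace + (Cᴴ * C).trace) := by
    intro θ
    apply mul_left_cancel₀ (pow_ne_zero 2 (mul_ne_zero two_ne_zero (Complex.exp_ne_zero _)))
    calc (2 * Complex.exp ((θ:ℂ) * Complex.I)) ^ 2 * ((Hmat C θ) ^ 2).trace
        = (((2 * Complex.exp ((θ:ℂ) * Complex.I)) • Hmat C θ) ^ 2).trace := by
          rw [smul_pow, Matrix.trace_smul, smul_eq_mul]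
      _ = ((C + (Complex.exp ((θ:ℂ) * Complex.I) * Complex.exp ((θ:ℂ) * Complex.I)) • Cᴴ) ^ 2).trace := by
          rw [← my_hmat_scaled C θ]
      _ = _ := my_expand2 C Cᴴ _
      _ = (2 * Complex.exp ((θ:ℂ) * Complex.I)) ^ 2 * (((1:ℂ)/4) * ((C * Cᴴ).trace + (Cᴴ * C).trace)) := by
          rw [hz_00, hz_11]
          ring
  have hT3 : ∀ θ : ℝ, ((Hmat C θ) ^ 3).trace = 0 := by
    intro θ
    apply mul_left_cancel₀ (pow_ne_zero 3 (mul_ne_zero two_ne_zero (Complex.exp_ne_zero _)))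
    calc (2 * Complex.exp ((θ:ℂ) * Complex.I)) ^ 3 * ((Hmat C θ) ^ 3).trace
        = (((2 * Complex.exp ((θ:ℂ) * Complex.I)) • Hmat C θ) ^ 3).trace := by
          rw [smul_pow, Matrix.trace_smul, smul_eq_mul]
      _ = ((C + (Complex.exp ((θ:ℂ) * Complex.I) * Complex.exp ((θ:ℂ) * Complex.I)) • Cᴴ) ^ 3).trace := by
          rw [← my_hmat_scaled C θ]
      _ = _ := my_expand3 C Cᴴ _
      _ = (2 * Complex.exp ((θ:ℂ) * Complex.I)) ^ 3 * (0) := by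
          rw [hz_000, hz_001, hz_010, hz_011, hz_100, hz_101, hz_110, hz_111]
          ring
  have hT4 : ∀ θ : ℝ, ((Hmat C θ) ^ 4).trace = ((1:ℂ)/16) * ((C * C * Cᴴ * Cᴴ).trace + (C * Cᴴ * C * Cᴴ).trace + (C * Cᴴ * Cᴴ * C).trace + (Cᴴ * C * C * Cᴴ).trace + (Cᴴ * C * Cᴴ * C).trace + (Cᴴ * Cᴴ * C * C).trace) := by
    intro θ
    apply mul_left_cancel₀ (pow_ne_zero 4 (mul_ne_zero two_ne_zero (Complex.exp_ne_zero _)))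
    calc (2 * Complex.exp ((θ:ℂ) * Complex.I)) ^ 4 * ((Hmat C θ) ^ 4).trace
        = (((2 * Complex.exp ((θ:ℂ) * Complex.I)) • Hmat C θ) ^ 4).trace := by
          rw [smul_pow, Matrix.trace_smul, smul_eq_mul]
      _ = ((C + (Complex.exp ((θ:ℂ) * Complex.I) * Complex.exp ((θ:ℂ) * Complex.I)) • Cᴴ) ^ 4).trace := by
          rw [← my_hmat_scaled C θ]
      _ = _ := my_expand4 C Cᴴ _
      _ = (2 * Complex.exp ((θ:ℂ) * Complex.I)) ^ 4 * (((1:ℂ)/16) * ((C * C * Cᴴ * Cᴴ).trace + (C * Cᴴ * C * Cᴴ).trace + (C * Cᴴ * Cᴴ * C).trace + (Cᴴ * C * C * Cᴴ).trace + (Cᴴ * C * Cᴴ * C).trace + (Cᴴ * Cᴴ * C * C).trace)) := by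
          rw [hz_0000, hz_0001, hz_0010, hz_0100, hz_0111, hz_1000, hz_1011, hz_1101, hz_1110, hz_1111]
          ring
  intro θ
  apply my_charpoly_eq_of_traces hn (hCherm θ) (hCherm 0)
  intro k hk1 hkn
  have hk4 : k ≤ 4 := hkn.trans hn
  interval_cases k
  · rw [hT1 θ, hT1 0]
  · rw [hT2 θ, hT2 0]
  · rw [hT3 θ, hT3 0]
  · rw [hT4 θ, hT4 0]
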